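/- arXiv:1902.02967 — 7 statements merged into one kernel-verified Lean document; each statement's English description precedes it below -/
import Mathlib

section
/- Let R be a commutative ring, n ≥ 2 an integer, and f, g ∈ R[X] polynomials of degree < n. Then the high short product of f and g equals the reversal of the low short product of the reversals of f quo X and g quo X; precisely: (f·g) quo X^n = rev_{n−1}( ( rev_{n−1}(f quo X) · rev_{n−1}(g quo X) ) mod X^{n−1} ). -/
/-!
Write `f = f₀ + X f₁` and `g = g₀ + X g₁`. The terms of `f g` involving `f₀` or `g₀` have
degree `< n`, so `(f g) quo X^n = (f₁ g₁) quo X^(n-2)`. For `p` of degree `≤ k + m`, reflection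
in degree `k + m` carries the coefficients of `p` above `X^k` to those below `X^(m+1)`, so
`p quo X^k` is the reflection of the low part of the reflection of `p`; since reflection is
multiplicative, the reflection of `f₁ g₁` is the product of the reflections of `f₁` and `g₁`.
-/

open Polynomial

namespace Polynomial

variable {R : Type*} [Ring R]

theorem coeff_divByMonic_X_pow (p : R[X]) (k i : ℕ) : (p /ₘ X ^ k).coeff i = p.coeff (i + k) := by
  nontriviality R
  have hmod : (p %ₘ X ^ k).degree < ↑(i + k) := by
    refine (degree_modByMonic_lt p (monic_X_pow k)).trans_le ?_
    rw [degree_X_pow]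
    exact_mod_cast le_add_self
  conv_rhs => rw [← modByMonic_add_div p (X ^ k)]
  rw [coeff_add, coeff_eq_zero_of_degree_lt hmod, zero_add, coeff_X_pow_mul]

theorem coeff_divByMonic_X (p : R[X]) (i : ℕ) : (p /ₘ X).coeff i = p.coeff (i + 1) := by
  simpa using coeff_divByMonic_X_pow p 1 i

theorem coeff_modByMonic_X_pow (p : R[X]) (k i : ℕ) :
    (p %ₘ X ^ k).coeff i = if i < k then p.coeff i else 0 := by
  nontriviality R
  split_ifs with hi
  · conv_rhs => rw [← modByMonic_add_div p (X ^ k)]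
    rw [coeff_add, coeff_X_pow_mul', if_neg (by omega), add_zero]
  · refine coeff_eq_zero_of_degree_lt ((degree_modByMonic_lt p (monic_X_pow k)).trans_le ?_)
    rw [degree_X_pow]
    exact_mod_cast not_lt.1 hi

theorem divByMonic_X_pow_eq_reflect_modByMonic {p : R[X]} {k m : ℕ} (hp : p.natDegree ≤ k + m) :
    p /ₘ X ^ k = reflect m (reflect (k + m) p %ₘ X ^ (m + 1)) := by
  ext i
  rw [coeff_divByMonic_X_pow, coeff_reflect, coeff_modByMonic_X_pow]
  rcases le_or_gt i m with hi | hi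
  · rw [revAt_le hi, if_pos (by omega), coeff_reflect, revAt_le (by omega)]
    congr 1
    omega
  · rw [revAt_eq_self_of_lt hi, if_neg (by omega)]
    exact coeff_eq_zero_of_natDegree_lt (by omega)

theorem coeff_mul_add_two (f g : R[X]) (j : ℕ) :
    (f * g).coeff (j + 2) = (f /ₘ X * (g /ₘ X)).coeff j + f.coeff 0 * g.coeff (j + 2)
      + f.coeff (j + 2) * g.coeff 0 := by
  rw [coeff_mul, Finset.Nat.sum_antidiagonal_succ, Finset.Nat.sum_antidiagonal_succ', coeff_mul]
  simp only [coeff_divByMonic_X]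
  abel

theorem mul_divByMonic_X_pow_add_two {f g : R[X]} {m : ℕ} (hf : f.degree < ↑(m + 2))
    (hg : g.degree < ↑(m + 2)) :
    (f * g) /ₘ X ^ (m + 2) = (f /ₘ X * (g /ₘ X)) /ₘ X ^ m := by
  ext i
  have hlt : (↑(m + 2) : WithBot ℕ) ≤ ↑(i + m + 2) := by exact_mod_cast by omega
  rw [coeff_divByMonic_X_pow, coeff_divByMonic_X_pow, ← add_assoc, coeff_mul_add_two,
    coeff_eq_zero_of_degree_lt (hf.trans_le hlt), coeff_eq_zero_of_degree_lt (hg.trans_le hlt),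
    mul_zero, zero_mul, add_zero, add_zero]

theorem natDegree_divByMonic_X_le {f : R[X]} {m : ℕ} (hf : f.degree < ↑(m + 2)) :
    (f /ₘ X).natDegree ≤ m := by
  refine natDegree_le_iff_coeff_eq_zero.2 fun i hi => ?_
  rw [coeff_divByMonic_X]
  exact coeff_eq_zero_of_degree_lt (hf.trans_le (by exact_mod_cast by omega))

end Polynomial

/-- For a commutative ring `R`, `n ≥ 2` and `f g : R[X]` of degree `< n`,
the high short product `(f·g) quo X^n` equals
`rev_{n−1}((rev_{n−1}(f quo X) · rev_{n−1}(g quo X)) mod X^{n−1})`,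
where `rev_t = Polynomial.reflect (t−1)`. -/
theorem high_short_product_eq_reversed_low_short_product
    {R : Type*} [CommRing R] (n : ℕ) (hn : 2 ≤ n)
    (f g : R[X]) (hf : f.degree < n) (hg : g.degree < n) :
    (f * g) /ₘ (X ^ n) =
      reflect (n - 2)
        ((reflect (n - 2) (f /ₘ X) * reflect (n - 2) (g /ₘ X)) %ₘ (X ^ (n - 1))) := by
  obtain ⟨m, rfl⟩ : ∃ m, n = m + 2 := ⟨n - 2, by omega⟩
  rw [Nat.add_sub_cancel, show m + 2 - 1 = m + 1 by omega, mul_divByMonic_X_pow_add_two hf hg,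
    ← reflect_mul _ _ (natDegree_divByMonic_X_le hf) (natDegree_divByMonic_X_le hg)]
  exact divByMonic_X_pow_eq_reflect_modByMonic (natDegree_mul_le.trans (add_le_add
    (natDegree_divByMonic_X_le hf) (natDegree_divByMonic_X_le hg)))
end

section
/- Let R be a commutative ring, n ≥ 1 an integer, f, g ∈ R[X] of degree < n, and h ∈ R[X] of degree < n−1. Then the high-order half-additive full product can be obtained by reversal from the low-order one: X^n·h + f·g = rev_{2n−1}( rev_n(f)·rev_n(g) + rev_{n−1}(h) ). -/
open Polynomial

lemma reflect_reflect_aux {R : Type*} [CommRing R] (p : R[X]) (M N : ℕ)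
    (hp : p.natDegree ≤ M) (hMN : M ≤ N) :
    reflect N (reflect M p) = X ^ (N - M) * p := by
  ext i
  rw [coeff_reflect, coeff_reflect, coeff_X_pow_mul']
  rcases le_or_gt i N with hiN | hiN
  · rw [revAt_le hiN]
    rcases le_or_gt (N - M) i with hi | hi
    · have h1 : N - i ≤ M := by omega
      rw [revAt_le h1, if_pos hi]
      congr 1
      omega
    · have h1 : M < N - i := by omega
      rw [revAt_eq_self_of_lt h1, if_neg (not_le.mpr hi)]
      exact coeff_eq_zero_of_natDegree_lt (by omega)
  · rw [revAt_eq_self_of_lt hiN, revAt_eq_self_of_lt (by omega)]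
    rw [if_pos (by omega), coeff_eq_zero_of_natDegree_lt (by omega),
      coeff_eq_zero_of_natDegree_lt (by omega)]

/-- For a commutative ring `R`, `n ≥ 1`, `f g : R[X]` of degree `< n` and
`h : R[X]` of degree `< n−1`, the high-order half-additive full product is obtained by
reversal from the low-order one:
`X^n·h + f·g = rev_{2n−1}(rev_n(f)·rev_n(g) + rev_{n−1}(h))`,
where `rev_t = Polynomial.reflect (t−1)`. -/
theorem high_half_additive_full_product_eq_reversed_low
    {R : Type*} [CommRing R] (n : ℕ) (hn : 1 ≤ n)
    (f g h : R[X]) (hf : f.degree < n) (hg : g.degree < n)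
    (hh : h.degree < ((n - 1 : ℕ) : WithBot ℕ)) :
    X ^ n * h + f * g =
      reflect (2 * n - 2) (reflect (n - 1) f * reflect (n - 1) g + reflect (n - 2) h) := by
  have hfn : f.natDegree ≤ n - 1 := by
    rcases eq_or_ne f 0 with rfl | hf0
    · simp
    · have := (degree_eq_natDegree hf0) ▸ hf
      exact_mod_cast by exact_mod_cast Nat.le_pred_of_lt (by exact_mod_cast this)
  have hgn : g.natDegree ≤ n - 1 := by
    rcases eq_or_ne g 0 with rfl | hg0
    · simp
    · have := (degree_eq_natDegree hg0) ▸ hg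
      exact_mod_cast by exact_mod_cast Nat.le_pred_of_lt (by exact_mod_cast this)
  have hfg : reflect (n - 1) f * reflect (n - 1) g = reflect (2 * n - 2) (f * g) := by
    have : (2 * n - 2) = (n - 1) + (n - 1) := by omega
    rw [this, reflect_mul f g hfn hgn]
  rw [reflect_add, hfg,
    reflect_reflect_aux (f * g) (2 * n - 2) (2 * n - 2)
      (le_trans (natDegree_mul_le) (by omega)) le_rfl]
  rcases Nat.lt_or_ge n 2 with h2 | h2
  · -- n = 1, so h = 0
    interval_cases n
    have hh0 : h = 0 := by
      rw [degree_lt_iff_coeff_zero] at hh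
      ext i
      simpa using hh i (by exact_mod_cast Nat.zero_le i)
    subst hh0
    simp
  · have hhn : h.natDegree ≤ n - 2 := by
      rcases eq_or_ne h 0 with rfl | hh0
      · simp
      · have := (degree_eq_natDegree hh0) ▸ hh
        have : h.natDegree < n - 1 := by exact_mod_cast this
        omega
    rw [reflect_reflect_aux h (n - 2) (2 * n - 2) hhn (by omega)]
    have : 2 * n - 2 - (n - 2) = n := by omega
    rw [this]
    simp [Nat.sub_self, add_comm]
end

section
/- Let R be a commutative ring, n ≥ 1 an integer, and f, g ∈ R[X] of degree < n. Set k = ⌈n/2⌉, f₀ = f mod X^k, f₁ = f quo X^k, f₀⁻ = f mod X^{⌊n/2⌋}, and similarly g₀, g₁, g₀⁻ for g. Then the low short product of f and g decomposes as: (f·g) mod X^n = ( f₀·g₀ + X^k·( ((f₀⁻·g₁) mod X^{⌊n/2⌋}) + ((f₁·g₀⁻) mod X^{⌊n/2⌋}) ) ) mod X^n. -/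
open Polynomial

/-!
Write `f = f₀ + X^k f₁` and `g = g₀ + X^k g₁`. Modulo `X^n = X^(k + m)` with `m = ⌊n/2⌋ ≤ k`,
the product `X^(2k) f₁ g₁` vanishes, and the cross terms `X^k (f₀ g₁ + f₁ g₀)` only matter
modulo `X^(k + m)`, so `f₀ g₁` and `f₁ g₀` may be replaced by anything congruent to them
modulo `X^m`; in particular by `(f₀⁻ g₁) mod X^m` and `(f₁ g₀⁻) mod X^m`, since `f₀ ≡ f₀⁻`
and `g₀ ≡ g₀⁻` modulo `X^m`.
-/

theorem pow_add_dvd_mul_sub_of_dvd {A : Type*} [CommRing A] {x a₀ a₁ b₀ b₁ c d : A} {k m : ℕ}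
    (hmk : m ≤ k) (hc : x ^ m ∣ a₀ * b₁ - c) (hd : x ^ m ∣ a₁ * b₀ - d) :
    x ^ (k + m) ∣ (a₀ + x ^ k * a₁) * (b₀ + x ^ k * b₁) - (a₀ * b₀ + x ^ k * (c + d)) := by
  have expand : (a₀ + x ^ k * a₁) * (b₀ + x ^ k * b₁) - (a₀ * b₀ + x ^ k * (c + d))
      = x ^ k * ((a₀ * b₁ - c) + (a₁ * b₀ - d)) + x ^ (k + k) * (a₁ * b₁) := by ring
  rw [expand]
  exact dvd_add (pow_add x k m ▸ mul_dvd_mul_left _ (dvd_add hc hd))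
    ((pow_dvd_pow x (by omega)).mul_right _)

namespace Polynomial

theorem dvd_modByMonic_sub_modByMonic {R : Type*} [Ring R] {q r : R[X]} (p : R[X]) (h : q ∣ r) :
    q ∣ p %ₘ r - p %ₘ q := by
  rw [← sub_sub_sub_cancel_right _ _ p]
  exact dvd_sub (h.trans (dvd_modByMonic_sub p r)) (dvd_modByMonic_sub p q)

theorem X_pow_dvd_modByMonic_mul_sub {R : Type*} [CommRing R] {k m : ℕ} (hmk : m ≤ k)
    (p q : R[X]) : X ^ m ∣ p %ₘ X ^ k * q - (p %ₘ X ^ m * q) %ₘ X ^ m := by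
  rw [← sub_add_sub_cancel _ (p %ₘ X ^ m * q), ← sub_mul]
  exact dvd_add ((dvd_modByMonic_sub_modByMonic p (pow_dvd_pow X hmk)).mul_right q)
    (dvd_sub_comm.mp (dvd_modByMonic_sub _ _))

end Polynomial

theorem low_short_product_split_general
    {R : Type*} [CommRing R] (n : ℕ)
    (f g : R[X]) :
    (f * g) %ₘ X ^ n =
      ((f %ₘ X ^ ((n + 1) / 2)) * (g %ₘ X ^ ((n + 1) / 2))
        + X ^ ((n + 1) / 2) *
          (((f %ₘ X ^ (n / 2)) * (g /ₘ X ^ ((n + 1) / 2))) %ₘ X ^ (n / 2)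
            + ((f /ₘ X ^ ((n + 1) / 2)) * (g %ₘ X ^ (n / 2))) %ₘ X ^ (n / 2))) %ₘ X ^ n := by
  set k := (n + 1) / 2
  set m := n / 2
  have hmk : m ≤ k := by omega
  have hn : k + m = n := by omega
  have cross_f := X_pow_dvd_modByMonic_mul_sub hmk f (g /ₘ X ^ k)
  have cross_g := X_pow_dvd_modByMonic_mul_sub hmk g (f /ₘ X ^ k)
  rw [mul_comm (g %ₘ X ^ k), mul_comm (g %ₘ X ^ m)] at cross_g
  have key := pow_add_dvd_mul_sub_of_dvd hmk cross_f cross_g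
  rw [modByMonic_add_div, modByMonic_add_div, hn] at key
  exact modByMonic_eq_of_dvd_sub (monic_X_pow n) key

/-- For a commutative ring `R`, `n ≥ 1`, and `f g : R[X]` of degree `< n`,
with `k = ⌈n/2⌉`, `f₀ = f mod X^k`, `f₁ = f quo X^k`, `f₀⁻ = f mod X^{⌊n/2⌋}` (and
similarly for `g`), the low short product decomposes as
`(f·g) mod X^n = (f₀·g₀ + X^k·((f₀⁻·g₁ mod X^{⌊n/2⌋}) + (f₁·g₀⁻ mod X^{⌊n/2⌋}))) mod X^n`. -/
theorem low_short_product_split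
    {R : Type*} [CommRing R] (n : ℕ) (hn : 1 ≤ n)
    (f g : R[X]) (hf : f.degree < n) (hg : g.degree < n) :
    (f * g) %ₘ X ^ n =
      ((f %ₘ X ^ ((n + 1) / 2)) * (g %ₘ X ^ ((n + 1) / 2))
        + X ^ ((n + 1) / 2) *
          (((f %ₘ X ^ (n / 2)) * (g /ₘ X ^ ((n + 1) / 2))) %ₘ X ^ (n / 2)
            + ((f /ₘ X ^ ((n + 1) / 2)) * (g %ₘ X ^ (n / 2))) %ₘ X ^ (n / 2))) %ₘ X ^ n :=
  low_short_product_split_general n f g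
end

section
/- Let R be a commutative ring, n ≥ 1 an integer, and f, g ∈ R[X] with deg f < 2n−1 and deg g < n. Then the balanced middle product is the sum of a high-short-product part of f mod X^n with g and a low-short-product part of f quo X^n with g; precisely: ((f·g) quo X^{n−1}) mod X^n = ( ((f mod X^n)·g) quo X^{n−1} ) mod X^n + X·( ((f quo X^n)·g) mod X^{n−1} ). -/
/-!
Write `f = (f mod X^n) + X^n·(f quo X^n)`. Since `X^n = X^(n-1)·X`, the second summand adds
exactly `X·(f quo X^n)·g` to the quotient of `f·g` by `X^(n-1)`, and reducing `X·h` modulo `X^n`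
gives `X·(h mod X^(n-1))`.
-/

open Polynomial

namespace Polynomial

variable {R : Type*} [CommRing R] {q m : R[X]}

theorem add_mul_divByMonic_left (hq : q.Monic) (p r : R[X]) : (p + q * r) /ₘ q = p /ₘ q + r := by
  nontriviality R
  refine (div_modByMonic_unique _ (p %ₘ q) hq ⟨?_, degree_modByMonic_lt p hq⟩).1
  rw [mul_add, ← add_assoc, modByMonic_add_div]

theorem mul_modByMonic_mul_left (hq : q.Monic) (hm : m.Monic) (p : R[X]) :
    (q * p) %ₘ (q * m) = q * (p %ₘ m) := by
  nontriviality R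
  refine (div_modByMonic_unique (p /ₘ m) _ (hq.mul hm) ⟨?_, ?_⟩).2
  · rw [mul_assoc, ← mul_add, modByMonic_add_div]
  · rw [hq.degree_mul_comm, hq.degree_mul_comm, hq.degree_mul, hq.degree_mul]
    exact WithBot.add_lt_add_right (degree_ne_bot.2 hq.ne_zero) (degree_modByMonic_lt p hm)

theorem X_mul_modByMonic_X_pow_succ (p : R[X]) (n : ℕ) :
    (X * p) %ₘ X ^ (n + 1) = X * (p %ₘ X ^ n) := by
  rw [pow_succ']
  exact mul_modByMonic_mul_left monic_X (monic_X_pow n) p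

end Polynomial

theorem middle_product_from_short_products_general
    {R : Type*} [CommRing R] (n : ℕ)
    (f g : R[X]) :
    ((f * g) /ₘ X ^ (n - 1)) %ₘ X ^ n =
      (((f %ₘ X ^ n) * g) /ₘ X ^ (n - 1)) %ₘ X ^ n
        + X * (((f /ₘ X ^ n) * g) %ₘ X ^ (n - 1)) := by
  cases n with
  | zero => simp
  | succ n =>
    have hsplit :
        f * g = (f %ₘ X ^ (n + 1)) * g + X ^ n * (X * ((f /ₘ X ^ (n + 1)) * g)) := by
      conv_lhs => rw [← modByMonic_add_div f (X ^ (n + 1))]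
      ring
    rw [Nat.add_sub_cancel, hsplit, add_mul_divByMonic_left (monic_X_pow n), add_modByMonic,
      X_mul_modByMonic_X_pow_succ]

/-- For a commutative ring `R`, `n ≥ 1`, and `f g : R[X]` with
`deg f < 2n−1` and `deg g < n`, the balanced middle product is the sum of a
high-short-product part and a shifted low-short-product part:
`((f·g) quo X^{n−1}) mod X^n
  = (((f mod X^n)·g) quo X^{n−1}) mod X^n + X·(((f quo X^n)·g) mod X^{n−1})`. -/
theorem middle_product_from_short_products
    {R : Type*} [CommRing R] (n : ℕ) (hn : 1 ≤ n)
    (f g : R[X]) (hf : f.degree < ((2 * n - 1 : ℕ) : WithBot ℕ)) (hg : g.degree < n) :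
    ((f * g) /ₘ X ^ (n - 1)) %ₘ X ^ n =
      (((f %ₘ X ^ n) * g) /ₘ X ^ (n - 1)) %ₘ X ^ n
        + X * (((f /ₘ X ^ n) * g) %ₘ X ^ (n - 1)) :=
  middle_product_from_short_products_general n f g
end

section
/- Let α, β be real numbers with 0 < α < 1 and β ≥ 0, let n > 0 be real, and define n_i = α^i·n + β·(1−α^{i+1})/(1−α) for i ∈ ℕ. Let M : ℝ → ℝ be nonnegative on (0,∞) with x ↦ M(x)/x nondecreasing on (0,∞), let λ, μ ≥ 0, and let K ∈ ℕ be such that 0 < λ·n_i + μ ≤ n for all 0 ≤ i < K. Then Σ_{i=0}^{K−1} M(λ·n_i + μ) ≤ (λ/(1−α))·M(n) + (λ·β/(1−α) + μ)·K·M(n)/n. -/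
/-- For reals `0 < α < 1`, `β ≥ 0`, `n > 0`, with
`n_i = α^i·n + β·(1−α^{i+1})/(1−α)`, if `M : ℝ → ℝ` is nonnegative on `(0,∞)` and
`x ↦ M(x)/x` is nondecreasing on `(0,∞)`, `λ, μ ≥ 0`, and `K` is such that
`0 < λ·n_i + μ ≤ n` for all `i < K`, then
`Σ_{i=0}^{K−1} M(λ·n_i + μ) ≤ (λ/(1−α))·M(n) + (λ·β/(1−α) + μ)·K·M(n)/n`. -/
theorem sum_M_ni_le
    (α β n : ℝ) (hα0 : 0 < α) (hα1 : α < 1) (hβ : 0 ≤ β) (hn : 0 < n)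
    (M : ℝ → ℝ) (hMpos : ∀ x : ℝ, 0 < x → 0 ≤ M x)
    (hMdiv : ∀ x y : ℝ, 0 < x → x ≤ y → M x / x ≤ M y / y)
    (lam mu : ℝ) (hlam : 0 ≤ lam) (hmu : 0 ≤ mu) (K : ℕ)
    (hK : ∀ i < K,
      0 < lam * (α ^ i * n + β * (1 - α ^ (i + 1)) / (1 - α)) + mu ∧
      lam * (α ^ i * n + β * (1 - α ^ (i + 1)) / (1 - α)) + mu ≤ n) :
    ∑ i ∈ Finset.range K, M (lam * (α ^ i * n + β * (1 - α ^ (i + 1)) / (1 - α)) + mu)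
      ≤ lam / (1 - α) * M n + (lam * β / (1 - α) + mu) * K * (M n / n) := by
  have h1α : (0:ℝ) < 1 - α := by linarith
  have hMn : 0 ≤ M n := hMpos n hn
  have hC : 0 ≤ M n / n := div_nonneg hMn hn.le
  have hgeo : ∑ i ∈ Finset.range K, α ^ i ≤ 1 / (1 - α) := by
    have hpow : 0 ≤ α ^ K := pow_nonneg hα0.le K
    rw [geom_sum_eq hα1.ne K,
      show (α ^ K - 1) / (α - 1) = (1 - α ^ K) / (1 - α) by rw [← neg_div_neg_eq]; ring_nf,
      div_le_div_iff₀ h1α h1α]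
    nlinarith
  calc ∑ i ∈ Finset.range K, M (lam * (α ^ i * n + β * (1 - α ^ (i + 1)) / (1 - α)) + mu)
      ≤ ∑ i ∈ Finset.range K,
          (lam * α ^ i * n + (lam * β / (1 - α) + mu)) * (M n / n) := by
        apply Finset.sum_le_sum
        intro i hi
        obtain ⟨hpos, hle⟩ := hK i (Finset.mem_range.mp hi)
        have h3 : M (lam * (α ^ i * n + β * (1 - α ^ (i + 1)) / (1 - α)) + mu)
            ≤ (M n / n) * (lam * (α ^ i * n + β * (1 - α ^ (i + 1)) / (1 - α)) + mu) :=
          (div_le_iff₀ hpos).mp (hMdiv _ n hpos hle)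
        have hpow1 : α ^ (i + 1) ≤ 1 := pow_le_one₀ hα0.le hα1.le
        have hfrac : β * (1 - α ^ (i + 1)) / (1 - α) ≤ β / (1 - α) := by
          rw [div_le_div_iff₀ h1α h1α]
          nlinarith [mul_nonneg (mul_nonneg hβ h1α.le) (pow_nonneg hα0.le (i + 1))]
        have h4 : lam * (α ^ i * n + β * (1 - α ^ (i + 1)) / (1 - α)) + mu
            ≤ lam * α ^ i * n + (lam * β / (1 - α) + mu) := by
          have := mul_le_mul_of_nonneg_left hfrac hlam
          have heq : lam * (β / (1 - α)) = lam * β / (1 - α) := by ring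
          nlinarith
        nlinarith [mul_le_mul_of_nonneg_left h4 hC]
    _ = (M n / n) * (lam * n * ∑ i ∈ Finset.range K, α ^ i)
          + (K : ℝ) * (lam * β / (1 - α) + mu) * (M n / n) := by
        rw [Finset.sum_congr rfl (fun i _ => by ring :
          ∀ i ∈ Finset.range K, (lam * α ^ i * n + (lam * β / (1 - α) + mu)) * (M n / n)
            = (M n / n) * (lam * n) * α ^ i + (lam * β / (1 - α) + mu) * (M n / n)),
          Finset.sum_add_distrib, ← Finset.mul_sum, Finset.sum_const, Finset.card_range,
          nsmul_eq_mul]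
        ring
    _ ≤ lam / (1 - α) * M n + (lam * β / (1 - α) + mu) * K * (M n / n) := by
        have hCn : M n / n * n = M n := div_mul_cancel₀ _ hn.ne'
        have h5 : (M n / n) * (lam * n * ∑ i ∈ Finset.range K, α ^ i)
            ≤ lam / (1 - α) * M n := by
          have h6 : (M n / n) * (lam * n * ∑ i ∈ Finset.range K, α ^ i)
              = lam * (M n / n * n) * ∑ i ∈ Finset.range K, α ^ i := by ring
          rw [h6, hCn]
          have := mul_le_mul_of_nonneg_left hgeo (mul_nonneg hlam hMn)
          calc lam * M n * ∑ i ∈ Finset.range K, α ^ i ≤ lam * M n * (1 / (1 - α)) := this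
            _ = lam / (1 - α) * M n := by ring
        linarith
end

section
/- Let α, β be real numbers with 0 < α < 1 and β ≥ 0, let n > 0 be real, and define n_i = α^i·n + β·(1−α^{i+1})/(1−α) for i ∈ ℕ. Let M : ℝ → ℝ be nonnegative on (0,∞) with x ↦ M(x)/x nondecreasing on (0,∞). Let s ≥ 1 and, for 1 ≤ k ≤ s, let a_k, λ_k, μ_k ≥ 0 be reals, and let b, c ≥ 0. Suppose T : ℝ → ℝ is nondecreasing and satisfies T(x) ≤ Σ_{k=1}^s a_k·M(λ_k·x + μ_k) + b·x + c + T(α·x + β) for every x ≥ 0, and let K ∈ ℕ be such that 0 < λ_k·n_i + μ_k ≤ n for all 0 ≤ i < K and 1 ≤ k ≤ s. Then T(n) ≤ T(n_K) + Σ_{k=1}^s a_k·( (λ_k/(1−α))·M(n) + (λ_k·β/(1−α) + μ_k)·K·M(n)/n ) + b·(n + β·K)/(1−α) + K·c. -/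
/-!
The points `n_i` are the orbit of `n + β` under `x ↦ α x + β`, so the recurrence telescopes along
them: `T(n) ≤ T(n_0) ≤ T(n_K) + Σ_{i<K} (Σ_k a_k M(λ_k n_i + μ_k) + b n_i + c)`. Since `M(x)/x` is
nondecreasing, each `M(λ_k n_i + μ_k)` is at most `(λ_k n_i + μ_k) M(n)/n`, and everything reduces
to the bound `Σ_{i<K} n_i ≤ (n + βK)/(1 − α)`, which follows from `n_i ≤ α^i n + β/(1 − α)`.
-/

open Finset

theorem le_add_sum_of_le_add_succ {G : Type*} [AddCommGroup G] [PartialOrder G]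
    [IsOrderedAddMonoid G] {f g : ℕ → G} {K : ℕ} (h : ∀ i < K, f i ≤ g i + f (i + 1)) :
    f 0 ≤ f K + ∑ i ∈ range K, g i := by
  have hdiff : ∑ i ∈ range K, (f i - f (i + 1)) ≤ ∑ i ∈ range K, g i :=
    sum_le_sum fun i hi => sub_le_iff_le_add.mpr (h i (mem_range.mp hi))
  rw [sum_range_sub'] at hdiff
  exact sub_le_iff_le_add'.mp hdiff

noncomputable def affineOrbit (α β n : ℝ) (i : ℕ) : ℝ :=
  α ^ i * n + β * (1 - α ^ (i + 1)) / (1 - α)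

namespace affineOrbit

variable {α β n : ℝ}

theorem zero (hα : α ≠ 1) : affineOrbit α β n 0 = n + β := by
  have : 1 - α ≠ 0 := sub_ne_zero.mpr hα.symm
  simp [affineOrbit, mul_div_assoc, div_self this]

theorem succ (hα : α ≠ 1) (i : ℕ) :
    affineOrbit α β n (i + 1) = α * affineOrbit α β n i + β := by
  have : 1 - α ≠ 0 := sub_ne_zero.mpr hα.symm
  simp only [affineOrbit]
  field_simp
  ring

theorem le_pow_mul_add (hα0 : 0 ≤ α) (hα1 : α < 1) (hβ : 0 ≤ β) (i : ℕ) :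
    affineOrbit α β n i ≤ α ^ i * n + β / (1 - α) := by
  have hpow : 0 ≤ α ^ (i + 1) := pow_nonneg hα0 _
  have : β * (1 - α ^ (i + 1)) / (1 - α) ≤ β / (1 - α) :=
    div_le_div_of_nonneg_right (by nlinarith) (sub_pos.mpr hα1).le
  exact (add_le_add_iff_left _).mpr this

theorem nonneg (hα0 : 0 ≤ α) (hα1 : α < 1) (hβ : 0 ≤ β) (hn : 0 ≤ n) (i : ℕ) :
    0 ≤ affineOrbit α β n i := by
  have hpow : α ^ (i + 1) ≤ 1 := pow_le_one₀ hα0 hα1.le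
  have : 0 ≤ β * (1 - α ^ (i + 1)) / (1 - α) :=
    div_nonneg (mul_nonneg hβ (sub_nonneg.mpr hpow)) (sub_pos.mpr hα1).le
  exact add_nonneg (mul_nonneg (pow_nonneg hα0 i) hn) this

theorem sum_range_le (hα0 : 0 ≤ α) (hα1 : α < 1) (hβ : 0 ≤ β) (hn : 0 ≤ n) (K : ℕ) :
    ∑ i ∈ range K, affineOrbit α β n i ≤ (n + β * K) / (1 - α) := by
  have hgeom : ∑ i ∈ range K, α ^ i ≤ 1 / (1 - α) := by
    have := geom_sum_Ico_le_of_lt_one (m := 0) (n := K) hα0 hα1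
    rwa [← range_eq_Ico, pow_zero] at this
  calc ∑ i ∈ range K, affineOrbit α β n i
      ≤ ∑ i ∈ range K, (α ^ i * n + β / (1 - α)) :=
        sum_le_sum fun i _ => le_pow_mul_add hα0 hα1 hβ i
    _ = (∑ i ∈ range K, α ^ i) * n + K * (β / (1 - α)) := by
      rw [sum_add_distrib, sum_mul, sum_const, card_range, nsmul_eq_mul]
    _ ≤ 1 / (1 - α) * n + K * (β / (1 - α)) := by gcongr
    _ = (n + β * K) / (1 - α) := by ring

end affineOrbit

theorem sum_le_of_div_monotone {M : ℝ → ℝ} {n lam mu S : ℝ} {x : ℕ → ℝ} {K : ℕ}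
    (hMdiv : ∀ x y : ℝ, 0 < x → x ≤ y → M x / x ≤ M y / y) (hMn : 0 ≤ M n / n)
    (hlam : 0 ≤ lam) (hx : ∀ i < K, 0 < lam * x i + mu ∧ lam * x i + mu ≤ n)
    (hS : ∑ i ∈ range K, x i ≤ S) :
    ∑ i ∈ range K, M (lam * x i + mu) ≤ (lam * S + K * mu) * (M n / n) := by
  calc ∑ i ∈ range K, M (lam * x i + mu)
      ≤ ∑ i ∈ range K, (lam * x i + mu) * (M n / n) := by
        refine sum_le_sum fun i hi => ?_
        obtain ⟨hpos, hle⟩ := hx i (mem_range.mp hi)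
        exact (div_le_iff₀' hpos).mp (hMdiv _ _ hpos hle)
    _ = (lam * ∑ i ∈ range K, x i + K * mu) * (M n / n) := by
        rw [← sum_mul, sum_add_distrib, mul_sum, sum_const, card_range, nsmul_eq_mul]
    _ ≤ (lam * S + K * mu) * (M n / n) := by gcongr

theorem unroll_recurrence_with_M_general
    (α β n : ℝ) (hα0 : 0 < α) (hα1 : α < 1) (hβ : 0 ≤ β) (hn : 0 < n)
    (M : ℝ → ℝ) (hMpos : ∀ x : ℝ, 0 < x → 0 ≤ M x)
    (hMdiv : ∀ x y : ℝ, 0 < x → x ≤ y → M x / x ≤ M y / y)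
    (s : ℕ) (a lam mu : ℕ → ℝ)
    (ha : ∀ k ∈ Finset.Icc 1 s, 0 ≤ a k)
    (hlam : ∀ k ∈ Finset.Icc 1 s, 0 ≤ lam k)
    (b c : ℝ) (hb : 0 ≤ b)
    (T : ℝ → ℝ) (hT : Monotone T)
    (hrec : ∀ x : ℝ, 0 ≤ x →
      T x ≤ (∑ k ∈ Finset.Icc 1 s, a k * M (lam k * x + mu k)) + b * x + c
              + T (α * x + β))
    (K : ℕ)
    (hK : ∀ i < K, ∀ k ∈ Finset.Icc 1 s,
      0 < lam k * (α ^ i * n + β * (1 - α ^ (i + 1)) / (1 - α)) + mu k ∧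
      lam k * (α ^ i * n + β * (1 - α ^ (i + 1)) / (1 - α)) + mu k ≤ n) :
    T n ≤ T (α ^ K * n + β * (1 - α ^ (K + 1)) / (1 - α))
        + (∑ k ∈ Finset.Icc 1 s,
            a k * (lam k / (1 - α) * M n + (lam k * β / (1 - α) + mu k) * K * (M n / n)))
        + b * (n + β * K) / (1 - α) + K * c := by
  set x := affineOrbit α β n
  have hS := affineOrbit.sum_range_le hα0.le hα1 hβ hn.le K
  have hMn : 0 ≤ M n / n := div_nonneg (hMpos n hn) hn.le
  have hterm : ∀ k ∈ Icc 1 s, ∑ i ∈ range K, a k * M (lam k * x i + mu k) ≤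
      a k * (lam k / (1 - α) * M n + (lam k * β / (1 - α) + mu k) * K * (M n / n)) := by
    intro k hk
    rw [← mul_sum]
    refine mul_le_mul_of_nonneg_left ?_ (ha k hk)
    refine (sum_le_of_div_monotone hMdiv hMn (hlam k hk) (fun i hi => hK i hi k hk) hS).trans_eq ?_
    field_simp [(sub_pos.mpr hα1).ne', hn.ne']
    ring
  calc T n ≤ T (x 0) := hT (by simp only [x, affineOrbit.zero hα1.ne]; linarith)
    _ ≤ T (x K) + ∑ i ∈ range K,
          ((∑ k ∈ Icc 1 s, a k * M (lam k * x i + mu k)) + b * x i + c) :=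
        le_add_sum_of_le_add_succ (f := fun i => T (x i)) fun i _ => by
          simp only [x, affineOrbit.succ hα1.ne]
          exact hrec _ (affineOrbit.nonneg hα0.le hα1 hβ hn.le i)
    _ = T (x K) + (∑ k ∈ Icc 1 s, ∑ i ∈ range K, a k * M (lam k * x i + mu k))
          + b * ∑ i ∈ range K, x i + K * c := by
        rw [sum_add_distrib, sum_add_distrib, sum_comm, ← mul_sum, sum_const, card_range,
          nsmul_eq_mul]
        ring
    _ ≤ _ := by
      gcongr _ + ?_ + ?_ + _
      · exact sum_le_sum hterm
      · rw [mul_div_assoc]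
        exact mul_le_mul_of_nonneg_left hS hb

/-- Explicit unrolled bound for the recurrence
`T(x) ≤ Σ_{k=1}^s a_k·M(λ_k·x + μ_k) + b·x + c + T(αx+β)`, with
`n_i = α^i·n + β·(1−α^{i+1})/(1−α)`:
`T(n) ≤ T(n_K) + Σ_{k=1}^s a_k·((λ_k/(1−α))·M(n) + (λ_k·β/(1−α)+μ_k)·K·M(n)/n)
       + b·(n+β·K)/(1−α) + K·c`. -/
theorem unroll_recurrence_with_M
    (α β n : ℝ) (hα0 : 0 < α) (hα1 : α < 1) (hβ : 0 ≤ β) (hn : 0 < n)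
    (M : ℝ → ℝ) (hMpos : ∀ x : ℝ, 0 < x → 0 ≤ M x)
    (hMdiv : ∀ x y : ℝ, 0 < x → x ≤ y → M x / x ≤ M y / y)
    (s : ℕ) (hs : 1 ≤ s) (a lam mu : ℕ → ℝ)
    (ha : ∀ k ∈ Finset.Icc 1 s, 0 ≤ a k)
    (hlam : ∀ k ∈ Finset.Icc 1 s, 0 ≤ lam k)
    (hmu : ∀ k ∈ Finset.Icc 1 s, 0 ≤ mu k)
    (b c : ℝ) (hb : 0 ≤ b) (hc : 0 ≤ c)
    (T : ℝ → ℝ) (hT : Monotone T)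
    (hrec : ∀ x : ℝ, 0 ≤ x →
      T x ≤ (∑ k ∈ Finset.Icc 1 s, a k * M (lam k * x + mu k)) + b * x + c
              + T (α * x + β))
    (K : ℕ)
    (hK : ∀ i < K, ∀ k ∈ Finset.Icc 1 s,
      0 < lam k * (α ^ i * n + β * (1 - α ^ (i + 1)) / (1 - α)) + mu k ∧
      lam k * (α ^ i * n + β * (1 - α ^ (i + 1)) / (1 - α)) + mu k ≤ n) :
    T n ≤ T (α ^ K * n + β * (1 - α ^ (K + 1)) / (1 - α))
        + (∑ k ∈ Finset.Icc 1 s,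
            a k * (lam k / (1 - α) * M n + (lam k * β / (1 - α) + mu k) * K * (M n / n)))
        + b * (n + β * K) / (1 - α) + K * c :=
  unroll_recurrence_with_M_general α β n hα0 hα1 hβ hn M hMpos hMdiv s a lam mu ha hlam b c hb T hT
    hrec K hK
end

section
/- Let α be real with 0 < α < 1, let λ, μ ≥ 0 and A ≥ 0 be reals, let n > 0 be real, and let m be real with m > 1/(1−α). Define m_i by m_0 = m and m_{i+1} = α·m_i + 1 (so m_i = α^i·m + (1−α^i)/(1−α) and m_i − 1/(1−α) = α^i·(m − 1/(1−α)) > 0 for all i). Suppose T : ℝ → ℝ satisfies T(x) ≤ (λ·x/n + μ/(x − 1/(1−α)) + 1)·A + T(α·x + 1) for every x > 1/(1−α). Then for every K ∈ ℕ, T(m) ≤ T(m_K) + A·( K + λ·(m + K)/((1−α)·n) + μ·α·(α^{−K} − 1)/((1−α)·m − 1) ). -/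
set_option maxHeartbeats 1000000 in
theorem aux_unroll_mp
    (α lam mu A n m : ℝ) (hα0 : 0 < α) (hα1 : α < 1)
    (hlam : 0 ≤ lam) (hmu : 0 ≤ mu) (hA : 0 ≤ A) (hn : 0 < n)
    (hm : 1 / (1 - α) < m)
    (T : ℝ → ℝ)
    (hrec : ∀ x : ℝ, 1 / (1 - α) < x →
      T x ≤ (lam * x / n + mu / (x - 1 / (1 - α)) + 1) * A + T (α * x + 1))
    (K : ℕ) :
    T m ≤ T (α ^ K * m + (1 - α ^ K) / (1 - α))
        + A * (K + lam * ((m - 1/(1-α)) * (1 - α ^ K) + K) / ((1-α) * n)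
            + mu * α * (α ^ (-(K : ℤ)) - 1) / ((1 - α) * m - 1)) := by
  have h1α : (0:ℝ) < 1 - α := by linarith
  have hmc : 0 < m - 1/(1-α) := by linarith
  have hden : (1-α) * m - 1 ≠ 0 := by
    have h : (1-α) * m - 1 = (1-α) * (m - 1/(1-α)) := by field_simp
    rw [h]; positivity
  induction K with
  | zero => norm_num
  | succ K ih =>
    have hp : (0:ℝ) < α ^ K := pow_pos hα0 K
    have hdiff : α ^ K * m + (1 - α^K)/(1-α) - 1/(1-α) = α^K * (m - 1/(1-α)) := by
      field_simp; ring
    have hmK : 1/(1-α) < α ^ K * m + (1 - α^K)/(1-α) := by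
      nlinarith [mul_pos hp hmc]
    have hrec' := hrec _ hmK
    have heq : α * (α ^ K * m + (1 - α^K)/(1-α)) + 1
        = α ^ (K+1) * m + (1 - α^(K+1))/(1-α) := by
      field_simp; ring
    rw [heq] at hrec'
    have hz : ∀ j : ℕ, α ^ (-(j:ℤ)) = (α ^ j)⁻¹ := fun j => by
      rw [zpow_neg, zpow_natCast]
    have key : (((K:ℝ) + lam * ((m - 1/(1-α)) * (1 - α ^ K) + K) / ((1-α) * n)
            + mu * α * (α ^ (-(K : ℤ)) - 1) / ((1 - α) * m - 1))
          + (lam * (α ^ K * m + (1 - α^K)/(1-α)) / n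
            + mu / ((α ^ K * m + (1 - α^K)/(1-α)) - 1/(1-α)) + 1))
        = (((K:ℕ)+1 : ℕ):ℝ)
            + lam * ((m - 1/(1-α)) * (1 - α ^ (K+1)) + ((K:ℕ)+1:ℕ)) / ((1-α) * n)
            + mu * α * (α ^ (-((K:ℕ)+1 : ℕ) : ℤ) - 1) / ((1 - α) * m - 1) := by
      have hden' : m * (1-α) - 1 ≠ 0 := by rw [mul_comm] at hden; exact hden
      rw [hdiff, hz, hz]
      push_cast
      rw [pow_succ]
      generalize α ^ K = x at hp ⊢
      field_simp [h1α.ne', hn.ne', hα0.ne', hp.ne', hmc.ne', hden, hden']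
      ring
    calc T m ≤ T (α ^ K * m + (1 - α^K)/(1-α))
          + A * ((K:ℝ) + lam * ((m - 1/(1-α)) * (1 - α ^ K) + K) / ((1-α) * n)
            + mu * α * (α ^ (-(K : ℤ)) - 1) / ((1 - α) * m - 1)) := ih
      _ ≤ ((lam * (α ^ K * m + (1 - α^K)/(1-α)) / n
            + mu / ((α ^ K * m + (1 - α^K)/(1-α)) - 1/(1-α)) + 1) * A
            + T (α ^ (K+1) * m + (1 - α^(K+1))/(1-α)))
          + A * ((K:ℝ) + lam * ((m - 1/(1-α)) * (1 - α ^ K) + K) / ((1-α) * n)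
            + mu * α * (α ^ (-(K : ℤ)) - 1) / ((1 - α) * m - 1)) := by linarith
      _ = T (α ^ (K+1) * m + (1 - α^(K+1))/(1-α))
          + A * ((((K:ℕ)+1 : ℕ):ℝ)
            + lam * ((m - 1/(1-α)) * (1 - α ^ (K+1)) + ((K:ℕ)+1:ℕ)) / ((1-α) * n)
            + mu * α * (α ^ (-((K:ℕ)+1 : ℕ) : ℤ) - 1) / ((1 - α) * m - 1)) := by
        rw [← key]; ring

/-- Explicit unrolled bound for the middle-product recurrence
`T(x) ≤ (λ·x/n + μ/(x − 1/(1−α)) + 1)·A + T(αx + 1)` for `x > 1/(1−α)`, with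
`m_i = α^i·m + (1−α^i)/(1−α)` (so `m_0 = m` and `m_{i+1} = α·m_i + 1`):
`T(m) ≤ T(m_K) + A·(K + λ·(m+K)/((1−α)·n) + μ·α·(α^{−K} − 1)/((1−α)·m − 1))`. -/
theorem unroll_middle_product_recurrence
    (α lam mu A n m : ℝ) (hα0 : 0 < α) (hα1 : α < 1)
    (hlam : 0 ≤ lam) (hmu : 0 ≤ mu) (hA : 0 ≤ A) (hn : 0 < n)
    (hm : 1 / (1 - α) < m)
    (T : ℝ → ℝ)
    (hrec : ∀ x : ℝ, 1 / (1 - α) < x →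
      T x ≤ (lam * x / n + mu / (x - 1 / (1 - α)) + 1) * A + T (α * x + 1))
    (K : ℕ) :
    T m ≤ T (α ^ K * m + (1 - α ^ K) / (1 - α))
        + A * (K + lam * (m + K) / ((1 - α) * n)
            + mu * α * (α ^ (-(K : ℤ)) - 1) / ((1 - α) * m - 1)) := by
  have h1α : (0:ℝ) < 1 - α := by linarith
  have hmc : 0 < m - 1/(1-α) := by linarith
  have haux := aux_unroll_mp α lam mu A n m hα0 hα1 hlam hmu hA hn hm T hrec K
  have hαK1 : α ^ K ≤ 1 := pow_le_one₀ hα0.le hα1.le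
  have hαK0 : 0 ≤ α ^ K := (pow_pos hα0 K).le
  have hm0 : 0 < m := by
    have h : (0:ℝ) < 1/(1-α) := by positivity
    linarith
  have hc : (0:ℝ) < 1/(1-α) := by positivity
  have hkey : (m - 1/(1-α)) * (1 - α ^ K) + (K:ℝ) ≤ m + K := by
    nlinarith [mul_nonneg (le_of_lt hmc) hαK0, hc]
  have h2 : lam * ((m - 1/(1-α)) * (1 - α ^ K) + (K:ℝ)) / ((1-α) * n)
      ≤ lam * (m + K) / ((1 - α) * n) := by
    gcongr
  have hfin : A * ((K:ℝ) + lam * ((m - 1/(1-α)) * (1 - α ^ K) + (K:ℝ)) / ((1-α) * n)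
            + mu * α * (α ^ (-(K : ℤ)) - 1) / ((1 - α) * m - 1))
      ≤ A * ((K:ℝ) + lam * (m + K) / ((1 - α) * n)
            + mu * α * (α ^ (-(K : ℤ)) - 1) / ((1 - α) * m - 1)) := by
    apply mul_le_mul_of_nonneg_left _ hA
    linarith
  linarith
end
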